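/- Let p ≥ 1 and n ≥ p + 1, and let the knots be uniform: t_i := a + i·h for i = 0, …, n+p, with a ∈ ℝ and h > 0. Then Σ_{i=1}^{p} i·B_i^p(t_p) = (p−1)/2; in particular B_p^p(t_p) = 0. -/

import Mathlib

/-- The B-spline functions of degree `p` for the knot sequence `t`, defined by the
Cox–de Boor recursion. `bspline t p i` is `B_i^p`. Fractions with zero denominator
are `0` (Lean's convention `x / 0 = 0`). -/
noncomputable def bspline (t : ℕ → ℝ) : ℕ → ℕ → ℝ → ℝ
  | 0, i, x => if t i ≤ x ∧ x < t (i + 1) then 1 else 0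
  | p + 1, i, x =>
      (x - t i) / (t (i + p + 1) - t i) * bspline t p i x +
      (t (i + p + 2) - x) / (t (i + p + 2) - t (i + 1)) * bspline t p (i + 1) x

/-!
At uniform knots `t i = a + i h`, the value `B_i^q(t_j)` depends only on `j - i`: it is the
value `N_q(j - i)` of the cardinal B-spline of degree `q` (knots `0, 1, …, q + 1`) at an
integer. Summing the Cox–de Boor recursion against a weight `c` moves it onto `N_q`, with
`c` replaced by a convex combination of `c m` and `c (m + 1)`. Taking `c = 1` gives the
partition of unity `Σ_m N_q(m) = 1`, and `c m = m` gives the mean `Σ_m m N_q(m) = (q + 1)/2`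
for `q ≥ 1`. Reflecting `i ↦ p - i`, the sum in question is `p · 1 - (p + 1)/2 = (p - 1)/2`.
Finally `B_p^p(t_p) = N_p(0) = 0`, since the left factor `m/(q+1)` vanishes at `m = 0`.
-/

open Finset

/-- `cardinalBSpline q m = N_q(m)`: the Cox–de Boor recursion for the knots `t i = i`, at `x = m`,
written through the shift `B_i^q(m) = N_q(m - i)`. -/
noncomputable def cardinalBSpline : ℕ → ℤ → ℝ
  | 0, m => if m = 0 then 1 else 0
  | q + 1, m => (m : ℝ) / (q + 1) * cardinalBSpline q m +
      ((q : ℝ) + 2 - m) / (q + 1) * cardinalBSpline q (m - 1)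

namespace cardinalBSpline

theorem eq_zero_of_neg : ∀ (q : ℕ) {m : ℤ}, m < 0 → cardinalBSpline q m = 0
  | 0, m, hm => by rw [cardinalBSpline, if_neg hm.ne]
  | q + 1, m, hm => by
    rw [cardinalBSpline, eq_zero_of_neg q hm, eq_zero_of_neg q (by omega : m - 1 < 0)]
    ring

theorem eq_zero_of_lt : ∀ (q : ℕ) {m : ℤ}, (q : ℤ) < m → cardinalBSpline q m = 0
  | 0, m, hm => by rw [cardinalBSpline, if_neg (by omega)]
  | q + 1, m, hm => by
    rw [cardinalBSpline, eq_zero_of_lt q (by omega : (q : ℤ) < m),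
      eq_zero_of_lt q (by omega : (q : ℤ) < m - 1)]
    ring

theorem succ_zero (q : ℕ) : cardinalBSpline (q + 1) 0 = 0 := by
  rw [cardinalBSpline, zero_sub, eq_zero_of_neg q (by norm_num : (-1 : ℤ) < 0)]
  simp

theorem sum_mul_succ (q : ℕ) (c : ℤ → ℝ) :
    ∑ m ∈ range (q + 2), c m * cardinalBSpline (q + 1) m =
      ∑ m ∈ range (q + 1),
        ((m : ℝ) / (q + 1) * c m + ((q : ℝ) + 1 - m) / (q + 1) * c (m + 1)) *
          cardinalBSpline q m := by
  simp only [cardinalBSpline, Int.cast_natCast, mul_add, sum_add_distrib, add_mul]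
  congr 1
  · rw [sum_range_succ, eq_zero_of_lt q (by push_cast; omega), mul_zero, mul_zero, add_zero]
    exact sum_congr rfl fun m _ => by ring
  · rw [sum_range_succ', Nat.cast_zero, zero_sub, eq_zero_of_neg q (by norm_num), mul_zero,
      mul_zero, add_zero]
    refine sum_congr rfl fun m _ => ?_
    push_cast
    rw [add_sub_cancel_right]
    ring

theorem sum_eq_one : ∀ q : ℕ, ∑ m ∈ range (q + 1), cardinalBSpline q m = 1
  | 0 => by simp [cardinalBSpline]
  | q + 1 => by
    have hq : (q : ℝ) + 1 ≠ 0 := by positivity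
    have := sum_mul_succ q fun _ => 1
    simp only [one_mul, mul_one] at this
    rw [this]
    refine (sum_congr rfl fun m _ => ?_).trans (sum_eq_one q)
    rw [← add_div, add_sub_cancel, div_self hq, one_mul]

theorem sum_natCast_mul_succ (q : ℕ) :
    ∑ m ∈ range (q + 2), (m : ℝ) * cardinalBSpline (q + 1) m =
      q / (q + 1) * ∑ m ∈ range (q + 1), (m : ℝ) * cardinalBSpline q m + 1 := by
  have hq : (q : ℝ) + 1 ≠ 0 := by positivity
  calc ∑ m ∈ range (q + 2), (m : ℝ) * cardinalBSpline (q + 1) m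
      = ∑ m ∈ range (q + 1), (q / (q + 1) * (m * cardinalBSpline q m) + cardinalBSpline q m) := by
        simpa using (sum_mul_succ q fun m => m).trans
          (sum_congr rfl fun m _ => by push_cast; field_simp; ring)
    _ = _ := by rw [sum_add_distrib, ← mul_sum, sum_eq_one]

theorem sum_natCast_mul_eq : ∀ q : ℕ, 1 ≤ q →
    ∑ m ∈ range (q + 1), (m : ℝ) * cardinalBSpline q m = (q + 1) / 2
  | 0, hq => absurd hq (by norm_num)
  | 1, _ => by norm_num [sum_range_succ, cardinalBSpline]
  | q + 2, _ => by
    rw [sum_natCast_mul_succ, sum_natCast_mul_eq (q + 1) (by omega)]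
    push_cast
    field_simp
    ring

end cardinalBSpline

theorem bspline_uniform_knot_eq_cardinalBSpline {a h : ℝ} (hh : 0 < h) {t : ℕ → ℝ}
    (ht : ∀ i, t i = a + i * h) :
    ∀ (q i j : ℕ), bspline t q i (t j) = cardinalBSpline q ((j : ℤ) - i)
  | 0, i, j => by
    rw [bspline, cardinalBSpline]
    refine if_congr ?_ rfl rfl
    simp only [ht, add_le_add_iff_left, add_lt_add_iff_left, mul_le_mul_iff_of_pos_right hh,
      mul_lt_mul_iff_of_pos_right hh, Nat.cast_le, Nat.cast_lt]
    omega
  | q + 1, i, j => by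
    rw [bspline, cardinalBSpline, bspline_uniform_knot_eq_cardinalBSpline hh ht q i j,
      bspline_uniform_knot_eq_cardinalBSpline hh ht q (i + 1) j]
    have cancel_h (x y : ℝ) : x * h / (y * h) = x / y := mul_div_mul_right x y hh.ne'
    simp only [ht, add_sub_add_left_eq_sub, ← sub_mul, cancel_h]
    push_cast
    rw [show (j : ℤ) - (i + 1) = j - i - 1 by ring]
    ring

theorem sum_Icc_mul_cardinalBSpline_sub (p : ℕ) :
    ∑ i ∈ Icc 1 p, (i : ℝ) * cardinalBSpline p ((p : ℤ) - i) =
      ∑ m ∈ range (p + 1), ((p : ℝ) - m) * cardinalBSpline p m := by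
  rw [← Ico_add_one_right_eq_Icc, ← sum_range_reflect, range_eq_Ico,
    sum_eq_sum_Ico_succ_bot p.succ_pos, add_tsub_cancel_right, Nat.sub_zero, sub_self, zero_mul,
    zero_add]
  refine sum_congr rfl fun i hi => ?_
  have hip : i ≤ p := Nat.lt_succ_iff.mp (mem_Ico.mp hi).2
  rw [Nat.cast_sub hip, Nat.cast_sub hip, sub_sub_cancel]

theorem bspline_T3_general (p : ℕ) (hp : 1 ≤ p)
    (a h : ℝ) (hh : 0 < h) (t : ℕ → ℝ) (ht : ∀ i, t i = a + (i : ℝ) * h) :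
    (∑ i ∈ Finset.Icc 1 p, (i : ℝ) * bspline t p i (t p) = ((p : ℝ) - 1) / 2) ∧
      bspline t p p (t p) = 0 := by
  simp only [bspline_uniform_knot_eq_cardinalBSpline hh ht, sub_self]
  refine ⟨?_, ?_⟩
  · rw [sum_Icc_mul_cardinalBSpline_sub]
    simp only [sub_mul, sum_sub_distrib, ← mul_sum, cardinalBSpline.sum_eq_one,
      cardinalBSpline.sum_natCast_mul_eq p hp]
    ring
  · obtain ⟨q, rfl⟩ : ∃ q, p = q + 1 := ⟨p - 1, by omega⟩
    exact cardinalBSpline.succ_zero q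

/-- For uniform knots, `T_3 = Σ_{i=1}^{p} i·B_i^p(t_p) = (p-1)/2`; in particular
`B_p^p(t_p) = 0`. -/
theorem bspline_T3 (p n : ℕ) (hp : 1 ≤ p) (hn : p + 1 ≤ n)
    (a h : ℝ) (hh : 0 < h) (t : ℕ → ℝ) (ht : ∀ i, t i = a + (i : ℝ) * h) :
    (∑ i ∈ Finset.Icc 1 p, (i : ℝ) * bspline t p i (t p) = ((p : ℝ) - 1) / 2) ∧
      bspline t p p (t p) = 0 :=
  bspline_T3_general p hp a h hh t ht
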